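/- For every a with 0 < a < √2, with ω0, τ0 as in the context, the functions z1(θ) = (1,0)ᵀ, z2(θ) = (sin(τ0 ω0 θ), ω0 cos(τ0 ω0 θ))ᵀ, z3(θ) = (cos(τ0 ω0 θ), −ω0 sin(τ0 ω0 θ))ᵀ on [−1,0] satisfy: (i) the differential relations z1'(θ) = 0, z2'(θ) = τ0 ω0 z3(θ), z3'(θ) = −τ0 ω0 z2(θ) for all θ ∈ [−1,0]; and (ii) the boundary conditions z_j'(0) = A z_j(0) + B z_j(−1) for j = 1,2,3, where A is the 2×2 matrix with rows (0, τ0) and (−τ0, a τ0) and B is the 2×2 matrix with B₂₁ = τ0 and all other entries 0. In other words, Φ_Λ = (z1, z2, z3) is a basis of solutions of the linearized equation satisfying U Φ_Λ = Φ_Λ U_Λ, where U_Λ is the 3×3 matrix with (U_Λ)₂₃ = −τ0 ω0, (U_Λ)₃₂ = τ0 ω0 and all other entries 0. -/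

import Mathlib

open Real

/-- `ω0(a) = √(2 - a²)`. -/
noncomputable def omega0 (a : ℝ) : ℝ := Real.sqrt (2 - a ^ 2)

/-- The critical delay `τ0(a)`. -/
noncomputable def tau0 (a : ℝ) : ℝ :=
  if 1 < a then Real.arcsin (a * omega0 a) / omega0 a
  else (Real.pi - Real.arcsin (a * omega0 a)) / omega0 a

/-- The basis functions `z1, z2, z3 : [−1,0] → ℝ²` of the generalized eigenspace. -/
noncomputable def zfun (a : ℝ) : Fin 3 → ℝ → ℝ × ℝ
  | 0 => fun _ => (1, 0)
  | 1 => fun θ => (Real.sin (tau0 a * omega0 a * θ), omega0 a * Real.cos (tau0 a * omega0 a * θ))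
  | 2 => fun θ => (Real.cos (tau0 a * omega0 a * θ), -omega0 a * Real.sin (tau0 a * omega0 a * θ))

/-- The matrix `A` applied to a vector: `A` has rows `(0, τ0)` and `(−τ0, a τ0)`. -/
noncomputable def matA (a : ℝ) (v : ℝ × ℝ) : ℝ × ℝ :=
  (tau0 a * v.2, -tau0 a * v.1 + a * tau0 a * v.2)

/-- The matrix `B` applied to a vector: `B₂₁ = τ0`, all other entries `0`. -/
noncomputable def matB (a : ℝ) (v : ℝ × ℝ) : ℝ × ℝ := (0, tau0 a * v.1)

/-!
`z₂, z₃` trace a uniformly rotated ellipse, so the differential relations are the derivatives of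
`sin` and `cos`. Evaluating the boundary conditions leaves `sin (τ₀ ω₀) = a ω₀` and
`cos (τ₀ ω₀) = a² − 1`, which is what the choice of the branch of `arcsin` in `τ₀` secures,
together with `ω₀² = 2 − a²`.
-/

theorem hasDerivAt_sin_mul_prodMk_cos_mul (c r θ : ℝ) :
    HasDerivAt (fun t => (sin (c * t), r * cos (c * t)))
      (c • (cos (c * θ), -r * sin (c * θ))) θ := by
  have hlin : HasDerivAt (fun t : ℝ => c * t) c θ := hasDerivAt_const_mul c
  convert (hlin.sin).prodMk (hlin.cos.const_mul r) using 1
  simp only [Prod.smul_mk, smul_eq_mul, Prod.mk.injEq]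
  constructor <;> ring

theorem hasDerivAt_cos_mul_prodMk_sin_mul (c r θ : ℝ) :
    HasDerivAt (fun t => (cos (c * t), -r * sin (c * t)))
      ((-c) • (sin (c * θ), r * cos (c * θ))) θ := by
  have hlin : HasDerivAt (fun t : ℝ => c * t) c θ := hasDerivAt_const_mul c
  convert (hlin.cos).prodMk (hlin.sin.const_mul (-r)) using 1
  simp only [Prod.smul_mk, smul_eq_mul, Prod.mk.injEq]
  constructor <;> ring

section Trig

variable {a : ℝ}

theorem omega0_sq (ha : a ^ 2 ≤ 2) : omega0 a ^ 2 = 2 - a ^ 2 :=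
  sq_sqrt (by linarith)

theorem omega0_pos (ha : a ^ 2 < 2) : 0 < omega0 a :=
  sqrt_pos.2 (by linarith)

theorem sq_mul_omega0 (ha : a ^ 2 ≤ 2) : (a * omega0 a) ^ 2 = 1 - (a ^ 2 - 1) ^ 2 := by
  rw [mul_pow, omega0_sq ha]
  ring

theorem abs_mul_omega0_le_one (ha : a ^ 2 ≤ 2) : |a * omega0 a| ≤ 1 := by
  rw [← sq_le_one_iff_abs_le_one, sq_mul_omega0 ha]
  nlinarith [sq_nonneg (a ^ 2 - 1)]

theorem sin_arcsin_mul_omega0 (ha : a ^ 2 ≤ 2) : sin (arcsin (a * omega0 a)) = a * omega0 a :=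
  have h := abs_le.1 (abs_mul_omega0_le_one ha)
  sin_arcsin h.1 h.2

theorem cos_arcsin_mul_omega0 (ha : a ^ 2 ≤ 2) : cos (arcsin (a * omega0 a)) = |a ^ 2 - 1| := by
  rw [cos_arcsin, sq_mul_omega0 ha, sub_sub_cancel, sqrt_sq_eq_abs]

theorem tau0_mul_omega0 (ha : a ^ 2 < 2) :
    tau0 a * omega0 a =
      if 1 < a then arcsin (a * omega0 a) else π - arcsin (a * omega0 a) := by
  have hω := (omega0_pos ha).ne'
  unfold tau0
  split <;> field_simp

theorem sin_tau0_mul_omega0 (ha : a ^ 2 < 2) : sin (tau0 a * omega0 a) = a * omega0 a := by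
  rw [tau0_mul_omega0 ha]
  split
  · exact sin_arcsin_mul_omega0 ha.le
  · rw [sin_pi_sub, sin_arcsin_mul_omega0 ha.le]

theorem cos_tau0_mul_omega0 (ha₁ : -1 ≤ a) (ha : a ^ 2 < 2) :
    cos (tau0 a * omega0 a) = a ^ 2 - 1 := by
  rw [tau0_mul_omega0 ha]
  split
  · rw [cos_arcsin_mul_omega0 ha.le, abs_of_nonneg (by nlinarith)]
  · rw [cos_pi_sub, cos_arcsin_mul_omega0 ha.le, abs_of_nonpos (by nlinarith)]
    ring

end Trig

section Basis

theorem hasDerivAt_zfun_zero (a θ : ℝ) : HasDerivAt (zfun a 0) ((0 : ℝ), (0 : ℝ)) θ :=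
  hasDerivAt_const θ ((1 : ℝ), (0 : ℝ))

theorem hasDerivAt_zfun_one (a θ : ℝ) :
    HasDerivAt (zfun a 1) ((tau0 a * omega0 a) • zfun a 2 θ) θ :=
  hasDerivAt_sin_mul_prodMk_cos_mul _ _ θ

theorem hasDerivAt_zfun_two (a θ : ℝ) :
    HasDerivAt (zfun a 2) ((-(tau0 a * omega0 a)) • zfun a 1 θ) θ :=
  hasDerivAt_cos_mul_prodMk_sin_mul _ _ θ

variable {a : ℝ}

theorem deriv_zfun_zero_at_zero :
    deriv (zfun a 0) 0 = matA a (zfun a 0 0) + matB a (zfun a 0 (-1)) := by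
  rw [(hasDerivAt_zfun_zero a 0).deriv]
  simp [zfun, matA, matB]

theorem deriv_zfun_one_at_zero (ha : a ^ 2 < 2) :
    deriv (zfun a 1) 0 = matA a (zfun a 1 0) + matB a (zfun a 1 (-1)) := by
  rw [(hasDerivAt_zfun_one a 0).deriv]
  simp only [zfun, matA, matB, mul_zero, sin_zero, cos_zero,
    mul_one, mul_neg_one, sin_neg, cos_neg, sin_tau0_mul_omega0 ha, Prod.smul_mk, smul_eq_mul,
    Prod.mk_add_mk, Prod.mk.injEq]
  constructor <;> ring

theorem deriv_zfun_two_at_zero (ha₁ : -1 ≤ a) (ha : a ^ 2 < 2) :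
    deriv (zfun a 2) 0 = matA a (zfun a 2 0) + matB a (zfun a 2 (-1)) := by
  rw [(hasDerivAt_zfun_two a 0).deriv]
  simp only [zfun, matA, matB, mul_zero, sin_zero, cos_zero,
    mul_one, mul_neg_one, sin_neg, cos_neg, cos_tau0_mul_omega0 ha₁ ha, Prod.smul_mk,
    smul_eq_mul, Prod.mk_add_mk, Prod.mk.injEq]
  constructor
  · ring
  · linear_combination (-tau0 a) * omega0_sq ha.le

end Basis

/-- the functions `z1, z2, z3` satisfy the differential relations
`z1' = 0`, `z2' = τ0 ω0 z3`, `z3' = −τ0 ω0 z2` on `[−1,0]` and the boundary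
conditions `zⱼ'(0) = A zⱼ(0) + B zⱼ(−1)`, i.e. `Φ_Λ = (z1,z2,z3)` satisfies
`U Φ_Λ = Φ_Λ U_Λ` with `(U_Λ)₂₃ = −τ0 ω0`, `(U_Λ)₃₂ = τ0 ω0`, all other entries `0`. -/
theorem zfun_solves_linearization (a : ℝ) (ha0 : 0 < a) (ha2 : a < Real.sqrt 2) :
    (∀ θ ∈ Set.Icc (-1 : ℝ) 0,
      HasDerivAt (zfun a 0) ((0 : ℝ), (0 : ℝ)) θ ∧
      HasDerivAt (zfun a 1) ((tau0 a * omega0 a) • zfun a 2 θ) θ ∧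
      HasDerivAt (zfun a 2) ((-(tau0 a * omega0 a)) • zfun a 1 θ) θ) ∧
    (∀ j : Fin 3, deriv (zfun a j) 0 = matA a (zfun a j 0) + matB a (zfun a j (-1))) := by
  have ha : a ^ 2 < 2 := (Real.lt_sqrt ha0.le).1 ha2
  refine ⟨fun θ _ => ⟨hasDerivAt_zfun_zero a θ, hasDerivAt_zfun_one a θ,
    hasDerivAt_zfun_two a θ⟩, fun j => ?_⟩
  fin_cases j
  · exact deriv_zfun_zero_at_zero
  · exact deriv_zfun_one_at_zero ha
  · exact deriv_zfun_two_at_zero (by linarith) ha
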